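/- If Γ, φ ⊨ t^l and t →* t' in the labelled SF-calculus (the reflexive-transitive closure of one-step contextual labelled SF-reduction), then Γ, φ ⊨ t'^{l'}, where l' is the top-level label of t'. (SF Soundness) -/
import Mathlib


/-!
Labelled SF-calculus and its 0CFA analysis, following
"0CFA for SF-calculus" (Lester).
-/

namespace SF0CFA

/-- Sublabel names for the labelled SF-calculus. -/
inductive Sub : Type
  | S0 | S1 | S2 | S3 | SL | SR
  | F0 | F1 | F2 | F3 | FL | FR | FM
  deriving DecidableEq

/-- Labels: a base label `n : ℕ` or a base label with a sublabel name. -/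
inductive Label : Type
  | base (n : ℕ)
  | sub (n : ℕ) (s : Sub)
  deriving DecidableEq

/-- Labelled SF-terms: `S^n`, `F^n`, labelled applications `t₁ @^l t₂`
and dummy leaves `⟨x⟩^l`. -/
inductive Term : Type
  | S (n : ℕ)
  | F (n : ℕ)
  | app (t₁ : Term) (l : Label) (t₂ : Term)
  | var (l : Label)
  deriving DecidableEq

/-- The top-level label of a labelled term. -/
def Term.label : Term → Label
  | .S n => .base n
  | .F n => .base n
  | .app _ l _ => l
  | .var l => l

/-- Abstract values: `S₀ⁿ, S₁ⁿ, S₂ⁿ, F₀ⁿ, F₁ⁿ, F₂ⁿ` and `@^{(l₁,l₂)}`. -/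
inductive Abs : Type
  | S0 (n : ℕ)
  | S1 (n : ℕ)
  | S2 (n : ℕ)
  | F0 (n : ℕ)
  | F1 (n : ℕ)
  | F2 (n : ℕ)
  | app (l₁ l₂ : Label)
  deriving DecidableEq

/-- The constraints generated by an application node whose function part has
label `l₁`, argument part label `l₂`, and whose own label is `l₃`. -/
def AppC (Γ : Label → Set Abs) (φ : Label → Bool) (l₁ l₂ l₃ : Label) : Prop :=
  (∃ l₄ l₅, Abs.app l₄ l₅ ∈ Γ l₃ ∧ Γ l₁ ⊆ Γ l₄ ∧ Γ l₂ ⊆ Γ l₅) ∧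
  (∀ n, Abs.S0 n ∈ Γ l₁ → Γ l₂ ⊆ Γ (.sub n .S0) ∧ Abs.S1 n ∈ Γ l₃) ∧
  (∀ n, Abs.S1 n ∈ Γ l₁ → Γ l₂ ⊆ Γ (.sub n .S1) ∧ Abs.S2 n ∈ Γ l₃) ∧
  (∀ n, Abs.S2 n ∈ Γ l₁ →
    Γ l₂ ⊆ Γ (.sub n .S2) ∧ Γ (.sub n .S3) ⊆ Γ l₃ ∧ φ (.base n) = true) ∧
  (∀ n, Abs.F0 n ∈ Γ l₁ → Γ l₂ ⊆ Γ (.sub n .F0) ∧ Abs.F1 n ∈ Γ l₃) ∧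
  (∀ n, Abs.F1 n ∈ Γ l₁ → Γ l₂ ⊆ Γ (.sub n .F1) ∧ Abs.F2 n ∈ Γ l₃) ∧
  (∀ n, Abs.F2 n ∈ Γ l₁ →
    Γ l₂ ⊆ Γ (.sub n .F2) ∧ Γ (.sub n .F3) ⊆ Γ l₃ ∧ φ (.base n) = true)

/-- `t_{Sⁿ} := (⟨f⟩^{n.S0} @^{n.SL} ⟨x⟩^{n.S2}) @^{n.S3} (⟨g⟩^{n.S1} @^{n.SR} ⟨x⟩^{n.S2})`. -/
def tS (n : ℕ) : Term :=
  .app (.app (.var (.sub n .S0)) (.sub n .SL) (.var (.sub n .S2)))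
       (.sub n .S3)
       (.app (.var (.sub n .S1)) (.sub n .SR) (.var (.sub n .S2)))

/-- `t_{Fⁿ} := (⟨y⟩^{n.F2} @^{n.FM} ⟨u⟩^{n.FL}) @^{n.F3} ⟨v⟩^{n.FR}`. -/
def tF (n : ℕ) : Term :=
  .app (.app (.var (.sub n .F2)) (.sub n .FM) (.var (.sub n .FL)))
       (.sub n .F3)
       (.var (.sub n .FR))

/-- A size measure used only to justify the well-foundedness of `Sat`. -/
def Term.size : Term → ℕ
  | .S _ => 8
  | .F _ => 8
  | .var _ => 1
  | .app t₁ _ t₂ => t₁.size + t₂.size + 1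

/-- The 0CFA acceptability judgement `Γ, φ ⊨ t` for labelled SF-terms. -/
def Sat (Γ : Label → Set Abs) (φ : Label → Bool) : Term → Prop
  | .S n => Abs.S0 n ∈ Γ (.base n) ∧ (φ (.base n) = true → Sat Γ φ (tS n))
  | .F n =>
      Abs.F0 n ∈ Γ (.base n) ∧
      (φ (.base n) = true →
        (∃ n₀, Abs.S0 n₀ ∈ Γ (.sub n .F0) ∨ Abs.F0 n₀ ∈ Γ (.sub n .F0)) →
        Γ (.sub n .F1) ⊆ Γ (.sub n .F3)) ∧
      (φ (.base n) = true →
        (∃ n₀, Abs.S1 n₀ ∈ Γ (.sub n .F0) ∨ Abs.S2 n₀ ∈ Γ (.sub n .F0) ∨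
               Abs.F1 n₀ ∈ Γ (.sub n .F0) ∨ Abs.F2 n₀ ∈ Γ (.sub n .F0)) →
        Sat Γ φ (tF n) ∧
        ∀ l₁ l₂, Abs.app l₁ l₂ ∈ Γ (.sub n .F0) →
          Γ l₁ ⊆ Γ (.sub n .FL) ∧ Γ l₂ ⊆ Γ (.sub n .FR))
  | .var _ => True
  | .app t₁ l₃ t₂ => Sat Γ φ t₁ ∧ Sat Γ φ t₂ ∧ AppC Γ φ t₁.label t₂.label l₃
termination_by t => t.size
decreasing_by all_goals simp [Term.size, tS, tF] <;> omega

/-- Factorable forms: terms of the shape `S`, `S u`, `S u v`, `F`, `F u`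
or `F u v` (applications carrying arbitrary labels). -/
inductive Factorable : Term → Prop
  | S (n : ℕ) : Factorable (.S n)
  | F (n : ℕ) : Factorable (.F n)
  | S1 (n : ℕ) (l : Label) (u : Term) : Factorable (.app (.S n) l u)
  | F1 (n : ℕ) (l : Label) (u : Term) : Factorable (.app (.F n) l u)
  | S2 (n : ℕ) (l₁ l₂ : Label) (u v : Term) :
      Factorable (.app (.app (.S n) l₁ u) l₂ v)
  | F2 (n : ℕ) (l₁ l₂ : Label) (u v : Term) :
      Factorable (.app (.app (.F n) l₁ u) l₂ v)

/-- Top-level labelled SF-reductions. -/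
inductive Red : Term → Term → Prop
  | S (n : ℕ) (l₄ l₅ l₆ : Label) (f g x : Term) :
      Red (.app (.app (.app (.S n) l₄ f) l₅ g) l₆ x)
          (.app (.app f (.sub n .SL) x) (.sub n .S3) (.app g (.sub n .SR) x))
  | Fatom (n : ℕ) (l₄ l₅ l₆ : Label) (f x y : Term)
      (hf : (∃ m, f = .S m) ∨ (∃ m, f = .F m)) :
      Red (.app (.app (.app (.F n) l₄ f) l₅ x) l₆ y) x
  | Ffact (n : ℕ) (l₂ l₄ l₅ l₆ : Label) (u v x y : Term)
      (hf : Factorable (.app u l₂ v)) :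
      Red (.app (.app (.app (.F n) l₄ (.app u l₂ v)) l₅ x) l₆ y)
          (.app (.app y (.sub n .FM) u) (.sub n .F3) v)

/-- Term contexts. -/
inductive Ctx : Type
  | hole
  | appL (C : Ctx) (l : Label) (t : Term)
  | appR (t : Term) (l : Label) (C : Ctx)

/-- Plugging a term into a context. -/
def Ctx.fill : Ctx → Term → Term
  | .hole, t => t
  | .appL C l u, t => .app (C.fill t) l u
  | .appR u l C, t => .app u l (C.fill t)

/-- One-step contextual labelled SF-reduction. -/
def Step (t t' : Term) : Prop :=
  ∃ (C : Ctx) (u u' : Term), Red u u' ∧ t = C.fill u ∧ t' = C.fill u'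

lemma sat_app {Γ : Label → Set Abs} {φ : Label → Bool} {t₁ t₂ : Term} {l : Label} :
    Sat Γ φ (.app t₁ l t₂) ↔
      Sat Γ φ t₁ ∧ Sat Γ φ t₂ ∧ AppC Γ φ t₁.label t₂.label l := by rw [Sat]

lemma sat_S {Γ : Label → Set Abs} {φ : Label → Bool} {n : ℕ} :
    Sat Γ φ (.S n) ↔
      Abs.S0 n ∈ Γ (.base n) ∧ (φ (.base n) = true → Sat Γ φ (tS n)) := by rw [Sat]

lemma sat_F {Γ : Label → Set Abs} {φ : Label → Bool} {n : ℕ} :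
    Sat Γ φ (.F n) ↔
      Abs.F0 n ∈ Γ (.base n) ∧
      (φ (.base n) = true →
        (∃ n₀, Abs.S0 n₀ ∈ Γ (.sub n .F0) ∨ Abs.F0 n₀ ∈ Γ (.sub n .F0)) →
        Γ (.sub n .F1) ⊆ Γ (.sub n .F3)) ∧
      (φ (.base n) = true →
        (∃ n₀, Abs.S1 n₀ ∈ Γ (.sub n .F0) ∨ Abs.S2 n₀ ∈ Γ (.sub n .F0) ∨
               Abs.F1 n₀ ∈ Γ (.sub n .F0) ∨ Abs.F2 n₀ ∈ Γ (.sub n .F0)) →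
        Sat Γ φ (tF n) ∧
        ∀ l₁ l₂, Abs.app l₁ l₂ ∈ Γ (.sub n .F0) →
          Γ l₁ ⊆ Γ (.sub n .FL) ∧ Γ l₂ ⊆ Γ (.sub n .FR)) := by rw [Sat]

lemma appC_mono {Γ : Label → Set Abs} {φ : Label → Bool} {l₁ l₂ l₃ l₁' l₂' : Label}
    (h : AppC Γ φ l₁ l₂ l₃) (h1 : Γ l₁' ⊆ Γ l₁) (h2 : Γ l₂' ⊆ Γ l₂) :
    AppC Γ φ l₁' l₂' l₃ := by
  obtain ⟨⟨l₄, l₅, hm, ha, hb⟩, c0, c1, c2, c3, c4, c5⟩ := h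
  exact ⟨⟨l₄, l₅, hm, h1.trans ha, h2.trans hb⟩,
    fun n hn => ⟨h2.trans (c0 n (h1 hn)).1, (c0 n (h1 hn)).2⟩,
    fun n hn => ⟨h2.trans (c1 n (h1 hn)).1, (c1 n (h1 hn)).2⟩,
    fun n hn => ⟨h2.trans (c2 n (h1 hn)).1, (c2 n (h1 hn)).2.1, (c2 n (h1 hn)).2.2⟩,
    fun n hn => ⟨h2.trans (c3 n (h1 hn)).1, (c3 n (h1 hn)).2⟩,
    fun n hn => ⟨h2.trans (c4 n (h1 hn)).1, (c4 n (h1 hn)).2⟩,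
    fun n hn => ⟨h2.trans (c5 n (h1 hn)).1, (c5 n (h1 hn)).2.1, (c5 n (h1 hn)).2.2⟩⟩

lemma red_sound {Γ : Label → Set Abs} {φ : Label → Bool} {t t' : Term}
    (hr : Red t t') (h : Sat Γ φ t) :
    Sat Γ φ t' ∧ Γ t'.label ⊆ Γ t.label := by
  cases hr with
  | S n l₄ l₅ l₆ f g x =>
    simp only [sat_app] at h
    obtain ⟨⟨⟨hSn, hf, hA1⟩, hg, hA2⟩, hx, hA3⟩ := h
    rw [sat_S] at hSn
    have h1 := hA1.2.1 n hSn.1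
    have h2 := hA2.2.2.1 n h1.2
    have h3 := hA3.2.2.2.1 n h2.2
    have hTS := hSn.2 h3.2.2
    simp only [tS, sat_app] at hTS
    obtain ⟨⟨-, -, hAL⟩, ⟨-, -, hAR⟩, hAT⟩ := hTS
    refine ⟨?_, h3.2.1⟩
    simp only [sat_app]
    exact ⟨⟨hf, hx, appC_mono hAL h1.1 h3.1⟩,
           ⟨hg, hx, appC_mono hAR h2.1 h3.1⟩, hAT⟩
  | Fatom n l₄ l₅ l₆ f x y hf =>
    simp only [sat_app] at h
    obtain ⟨⟨⟨hFn, hfS, hA1⟩, hx, hA2⟩, hy, hA3⟩ := h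
    rw [sat_F] at hFn
    have h1 := hA1.2.2.2.2.1 n hFn.1
    have h2 := hA2.2.2.2.2.2.1 n h1.2
    have h3 := hA3.2.2.2.2.2.2 n h2.2
    have hex : ∃ n₀, Abs.S0 n₀ ∈ Γ (.sub n .F0) ∨ Abs.F0 n₀ ∈ Γ (.sub n .F0) := by
      rcases hf with ⟨m, rfl⟩ | ⟨m, rfl⟩
      · rw [sat_S] at hfS
        exact ⟨m, Or.inl (h1.1 hfS.1)⟩
      · rw [sat_F] at hfS
        exact ⟨m, Or.inr (h1.1 hfS.1)⟩
    have h13 := hFn.2.1 h3.2.2 hex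
    exact ⟨hx, fun a ha => h3.2.1 (h13 (h2.1 ha))⟩
  | Ffact n l₂ l₄ l₅ l₆ u v x y hfact =>
    simp only [sat_app] at h
    obtain ⟨⟨⟨hFn, hfS, hA1⟩, hx, hA2⟩, hy, hA3⟩ := h
    obtain ⟨hu, hv, hAuv⟩ := hfS
    rw [sat_F] at hFn
    have h1 := hA1.2.2.2.2.1 n hFn.1
    have h2 := hA2.2.2.2.2.2.1 n h1.2
    have h3 := hA3.2.2.2.2.2.2 n h2.2
    have hex : ∃ n₀, Abs.S1 n₀ ∈ Γ (.sub n .F0) ∨ Abs.S2 n₀ ∈ Γ (.sub n .F0) ∨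
        Abs.F1 n₀ ∈ Γ (.sub n .F0) ∨ Abs.F2 n₀ ∈ Γ (.sub n .F0) := by
      cases hfact with
      | S1 m l w =>
        rw [sat_S] at hu
        exact ⟨m, Or.inl (h1.1 (hAuv.2.1 m hu.1).2)⟩
      | F1 m l w =>
        rw [sat_F] at hu
        exact ⟨m, Or.inr (Or.inr (Or.inl (h1.1 (hAuv.2.2.2.2.1 m hu.1).2)))⟩
      | S2 m la lb w w' =>
        rw [sat_app] at hu
        obtain ⟨huS, -, hAin⟩ := hu
        rw [sat_S] at huS
        exact ⟨m, Or.inr (Or.inl (h1.1 (hAuv.2.2.1 m (hAin.2.1 m huS.1).2).2))⟩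
      | F2 m la lb w w' =>
        rw [sat_app] at hu
        obtain ⟨huF, -, hAin⟩ := hu
        rw [sat_F] at huF
        exact ⟨m, Or.inr (Or.inr (Or.inr (h1.1
          (hAuv.2.2.2.2.2.1 m (hAin.2.2.2.2.1 m huF.1).2).2)))⟩
    obtain ⟨hTF, hApps⟩ := hFn.2.2 h3.2.2 hex
    obtain ⟨la, lb, hmem, hua, hvb⟩ := hAuv.1
    obtain ⟨hLa, hLb⟩ := hApps la lb (h1.1 hmem)
    simp only [tF, sat_app] at hTF
    obtain ⟨⟨-, -, hAM⟩, -, hAT⟩ := hTF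
    refine ⟨?_, h3.2.1⟩
    simp only [sat_app]
    exact ⟨⟨hy, hu, appC_mono hAM h3.1 (hua.trans hLa)⟩, hv,
      appC_mono hAT (le_refl _) (hvb.trans hLb)⟩

lemma step_sound {Γ : Label → Set Abs} {φ : Label → Bool} (C : Ctx) {u u' : Term}
    (hr : Red u u') (h : Sat Γ φ (C.fill u)) :
    Sat Γ φ (C.fill u') ∧ Γ ((C.fill u').label) ⊆ Γ ((C.fill u).label) := by
  induction C with
  | hole => exact red_sound hr h
  | appL C l t ih =>
    rw [Ctx.fill, sat_app] at h
    obtain ⟨h1, h2, h3⟩ := h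
    obtain ⟨h1', hsub⟩ := ih h1
    refine ⟨?_, le_refl _⟩
    rw [Ctx.fill, sat_app]
    exact ⟨h1', h2, appC_mono h3 hsub (le_refl _)⟩
  | appR t l C ih =>
    rw [Ctx.fill, sat_app] at h
    obtain ⟨h1, h2, h3⟩ := h
    obtain ⟨h2', hsub⟩ := ih h2
    refine ⟨?_, le_refl _⟩
    rw [Ctx.fill, sat_app]
    exact ⟨h1, h2', appC_mono h3 (le_refl _) hsub⟩

/-- **SF Soundness.**
If `Γ, φ ⊨ t^l` and `t →* t'` in the labelled SF-calculus (the
reflexive-transitive closure of one-step contextual labelled SF-reduction),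
then `Γ, φ ⊨ t'^{l'}`, where `l'` is the top-level label of `t'`. -/
theorem sf_soundness
    (Γ : Label → Set Abs) (φ : Label → Bool)
    (t t' : Term) (h : Sat Γ φ t)
    (hsteps : Relation.ReflTransGen Step t t') :
    Sat Γ φ t' := by
  induction hsteps with
  | refl => exact h
  | tail _ hstep ih =>
    obtain ⟨C, u, u', hr, rfl, rfl⟩ := hstep
    exact (step_sound C hr ih).1

end SF0CFA
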